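/- Let G be an Abelian locally linear median group. Then G is an A-group if and only if x ∩ x⁻¹ = 1 for all x ∈ G, and this holds if and only if there exist exactly two (mutually opposite) total orders on G making G a totally ordered abelian group whose associated median structure is the given one. -/
import Mathlib


namespace ArtinMedian

/-- A median group, presented via a meet-semilattice operation `∩` (with induced
order `x ⊂ y ↔ x ∩ y = x`) satisfying: (1) `1 ⊂ x`; (2) `x ⊂ y → y ⊂ z →
z⁻¹y ⊂ z⁻¹x`; (3) `x⁻¹(x ∩ y) ⊂ x⁻¹y`. -/
class MedianGroup (G : Type*) extends Group G where
  meet : G → G → G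
  meet_comm : ∀ x y, meet x y = meet y x
  meet_assoc : ∀ x y z, meet (meet x y) z = meet x (meet y z)
  meet_idem : ∀ x, meet x x = x
  one_meet : ∀ x, meet 1 x = 1
  inv_mul_antitone : ∀ x y z, meet x y = x → meet y z = y →
    meet (z⁻¹ * y) (z⁻¹ * x) = z⁻¹ * y
  meet_axiom : ∀ x y, meet (x⁻¹ * meet x y) (x⁻¹ * y) = x⁻¹ * meet x y

namespace MedianGroup

variable {G : Type*} [MedianGroup G]

/-- The order `x ⊂ y` of a median group. -/
def sub (x y : G) : Prop := meet x y = x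

/-- `j` is the join (least upper bound) `x ∪ y`. -/
def isJoin (x y j : G) : Prop :=
  sub x j ∧ sub y j ∧ ∀ c, sub x c → sub y c → sub j c

/-- The join `x ∪ y` exists (`x ∪ y ≠ ∞`). -/
def hasJoin (x y : G) : Prop := ∃ j, isJoin x y j

/-- Orthogonality: `x ⊥ y` iff `x ∩ y = 1` and `x ∪ y` exists. -/
def orth (x y : G) : Prop := meet x y = 1 ∧ hasJoin x y

/-- `G` is a `⊥`-group: `x ⊥ y` implies `x ∪ y = xy`. -/
def PerpGroup (G : Type*) [MedianGroup G] : Prop :=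
  ∀ x y : G, orth x y → isJoin x y (x * y)

/-- Axiom A₁: `x ∪ y` exists and `x⁻¹ ⊂ y⁻¹` imply `x ⊂ y`. -/
def A1 (G : Type*) [MedianGroup G] : Prop :=
  ∀ x y : G, hasJoin x y → sub x⁻¹ y⁻¹ → sub x y

/-- Axiom A₂: `x ∩ y = x⁻¹ ∩ z = y⁻¹ ∩ z = 1` imply `xz ∩ yz ⊂ z`. -/
def A2 (G : Type*) [MedianGroup G] : Prop :=
  ∀ x y z : G, meet x y = 1 → meet x⁻¹ z = 1 → meet y⁻¹ z = 1 →
    sub (meet (x * z) (y * z)) z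

/-- Axiom A₄: if `x ∪ x⁻¹` exists then `x = 1`. -/
def A4 (G : Type*) [MedianGroup G] : Prop :=
  ∀ x : G, hasJoin x x⁻¹ → x = 1

/-- An A-group: a `⊥`-group satisfying A₁, A₂ and A₄. -/
def AGroup (G : Type*) [MedianGroup G] : Prop :=
  PerpGroup G ∧ A1 G ∧ A2 G ∧ A4 G

/-- The median of a median group: `Y(x,y,z) = x·((x⁻¹y) ∩ (x⁻¹z))`. -/
def medY (x y z : G) : G := x * meet (x⁻¹ * y) (x⁻¹ * z)

/-- The interval (cell) `[x,y]` of a median group. -/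
def interval (x y : G) : Set G := {z | sub (x⁻¹ * z) (x⁻¹ * y)}

/-- Convexity of a subset of a median group. -/
def IsConvex (C : Set G) : Prop :=
  ∀ x y z : G, x ∈ C → y ∈ C → medY x z y ∈ C

/-- `G` is locally linear: every interval has boundary consisting of its two
endpoints, i.e. `[x,y] = [a,b]` forces `{a,b} = {x,y}`. -/
def LocallyLinear (G : Type*) [MedianGroup G] : Prop :=
  ∀ x y a b : G, interval x y = interval a b → ({a, b} : Set G) = {x, y}

/-- `r` is a translation-invariant total order on the (Abelian) group `G` whose
associated median structure is the given one, i.e. `x ⊂ y` holds precisely when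
`x` lies between `1` and `y` for the order `r`. -/
def OrderCompat (G : Type*) [MedianGroup G] (r : G → G → Prop) : Prop :=
  (∀ a : G, r a a) ∧
  (∀ a b c : G, r a b → r b c → r a c) ∧
  (∀ a b : G, r a b → r b a → a = b) ∧
  (∀ a b : G, r a b ∨ r b a) ∧
  (∀ a b c : G, r a b → r (c * a) (c * b)) ∧
  (∀ x y : G, sub x y ↔ ((r 1 x ∧ r x y) ∨ (r x 1 ∧ r y x)))

/-! ### Auxiliary development -/

section Basic

variable {G : Type*} [MedianGroup G]

theorem sub_refl (x : G) : sub x x := meet_idem x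

theorem sub_antisymm {x y : G} (h1 : sub x y) (h2 : sub y x) : x = y := by
  unfold sub at h1 h2
  rw [← h1, meet_comm, h2]

theorem sub_trans {x y z : G} (h1 : sub x y) (h2 : sub y z) : sub x z := by
  unfold sub at *
  calc meet x z = meet (meet x y) z := by rw [h1]
    _ = meet x (meet y z) := meet_assoc x y z
    _ = meet x y := by rw [h2]
    _ = x := h1

theorem one_sub (x : G) : sub 1 x := one_meet x

theorem sub_one {x : G} (h : sub x 1) : x = 1 := by
  unfold sub at h
  rw [← h, meet_comm, one_meet]

theorem meet_sub_left {x y : G} : sub (meet x y) x := by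
  unfold sub
  rw [meet_comm, ← meet_assoc, meet_idem]

theorem meet_sub_right {x y : G} : sub (meet x y) y := by
  rw [meet_comm]; exact meet_sub_left

theorem sub_meet {z x y : G} (h1 : sub z x) (h2 : sub z y) : sub z (meet x y) := by
  unfold sub at *
  rw [← meet_assoc, h1, h2]

/-- (T): `x ⊂ y ⊂ z` implies `z⁻¹y ⊂ z⁻¹x`. -/
theorem T' {x y z : G} (h1 : sub x y) (h2 : sub y z) : sub (z⁻¹ * y) (z⁻¹ * x) :=
  inv_mul_antitone x y z h1 h2

/-- (M): `x⁻¹(x ∩ y) ⊂ x⁻¹ y`. -/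
theorem M' (x y : G) : sub (x⁻¹ * meet x y) (x⁻¹ * y) :=
  meet_axiom x y

/-- (S), forward: `a ⊂ b` implies `b⁻¹a ⊂ b⁻¹`. -/
theorem S_fwd {a b : G} (h : sub a b) : sub (b⁻¹ * a) b⁻¹ := by
  have := inv_mul_antitone 1 a b (one_meet a) h
  rw [mul_one] at this
  exact this

/-- (S), backward. -/
theorem S_bwd {a b : G} (h : sub (b⁻¹ * a) b⁻¹) : sub a b := by
  have := S_fwd h
  rw [inv_inv, mul_inv_cancel_left] at this
  exact this

/-- (Bmeet): `a ⊂ b ↔ a⁻¹ ∩ a⁻¹b = 1`. -/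
theorem sub_iff_meet_eq_one {a b : G} : sub a b ↔ meet a⁻¹ (a⁻¹ * b) = 1 := by
  constructor
  · intro h
    set g := meet a⁻¹ (a⁻¹ * b) with hg
    have hp : sub g a⁻¹ := meet_sub_left
    have hq : sub g (a⁻¹ * b) := meet_sub_right
    have h1 : sub ((a⁻¹)⁻¹ * g) (a⁻¹)⁻¹ := S_fwd hp
    rw [inv_inv] at h1
    -- h1 : sub (a * g) a
    have h2 : sub a (a⁻¹⁻¹ * (a⁻¹ * b)) := by
      rw [inv_inv, mul_inv_cancel_left]; exact h
    rw [inv_inv, mul_inv_cancel_left] at h2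
    -- h2 : sub a b  (same as h); we need sub (a*g) a and sub a b, then T'
    have h3 := T' h1 h2
    -- h3 : sub (b⁻¹ * a) (b⁻¹ * (a * g))
    have h4 : sub ((a⁻¹ * b)⁻¹ * g) (a⁻¹ * b)⁻¹ := S_fwd hq
    rw [mul_inv_rev, inv_inv] at h4
    -- h4 : sub (b⁻¹ * a * g) (b⁻¹ * a)
    rw [show b⁻¹ * (a * g) = b⁻¹ * a * g by rw [mul_assoc]] at h3
    have h5 := sub_antisymm h3 h4
    -- h5 : b⁻¹ * a = b⁻¹ * a * g
    have : (b⁻¹ * a) * 1 = b⁻¹ * a * g := by rw [mul_one]; exact h5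
    exact (mul_left_cancel this).symm
  · intro h
    have := meet_axiom a⁻¹ (a⁻¹ * b)
    rw [h, mul_one, inv_inv, mul_inv_cancel_left] at this
    exact this

/-- `c ∩ (cv) = 1 ↔ c⁻¹ ⊂ v`. -/
theorem meet_mul_eq_one_iff {c v : G} : meet c (c * v) = 1 ↔ sub c⁻¹ v := by
  rw [sub_iff_meet_eq_one, inv_inv]

/-- `u ⊂ uv ↔ u⁻¹ ∩ v = 1`. -/
theorem sub_mul_iff {u v : G} : sub u (u * v) ↔ meet u⁻¹ v = 1 := by
  rw [sub_iff_meet_eq_one, inv_mul_cancel_left]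

/-- Interval membership, meet form. -/
theorem interval_sub_iff {x y z : G} :
    sub (x⁻¹ * z) (x⁻¹ * y) ↔ meet (z⁻¹ * x) (z⁻¹ * y) = 1 := by
  rw [sub_iff_meet_eq_one]
  have e1 : (x⁻¹ * z)⁻¹ = z⁻¹ * x := by rw [mul_inv_rev, inv_inv]
  rw [e1, mul_assoc, mul_inv_cancel_left]

/-- (⋆) Symmetry of the median: `a ∩ b = a (a⁻¹ ∩ a⁻¹b)`. -/
theorem star (a b : G) : meet a b = a * meet a⁻¹ (a⁻¹ * b) := by
  set n := meet a⁻¹ (a⁻¹ * b) with hn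
  have h1 : sub (a * n) a := by
    have := S_fwd (meet_sub_left : sub n a⁻¹)
    rwa [inv_inv] at this
  have h2 : sub (a * n) b := by
    have := meet_axiom a⁻¹ (a⁻¹ * b)
    rw [inv_inv, mul_inv_cancel_left] at this
    exact this
  have h3 : sub (a * n) (meet a b) := sub_meet h1 h2
  have h4 : sub (a⁻¹ * meet a b) n := by
    refine sub_meet ?_ (meet_axiom a b)
    exact S_fwd (meet_sub_left : sub (meet a b) a)
  -- direction 1 : sub (b⁻¹ * meet a b) (b⁻¹ * (a*n))
  have h5 := T' h3 (meet_sub_right : sub (meet a b) b)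
  -- direction 2 : (T) on (a⁻¹ * meet a b) ⊂ n ⊂ (a⁻¹*b)
  have h6 := T' h4 (meet_sub_right : sub n (a⁻¹ * b))
  -- h6 : sub ((a⁻¹*b)⁻¹ * n) ((a⁻¹*b)⁻¹ * (a⁻¹ * meet a b))
  rw [mul_inv_rev, inv_inv, mul_assoc b⁻¹ a n,
    show b⁻¹ * a * (a⁻¹ * meet a b) = b⁻¹ * meet a b by
      rw [mul_assoc, mul_inv_cancel_left]] at h6
  -- h6 : sub (b⁻¹ * (a * n)) (b⁻¹ * meet a b)
  have := sub_antisymm h6 h5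
  exact (mul_left_cancel this).symm

/-- Uniqueness of the median point (basepoint 1). -/
theorem eq_meet_of {s a b : G} (hsa : sub s a) (hsb : sub s b)
    (hm : sub (a⁻¹ * s) (a⁻¹ * b)) : s = meet a b := by
  have h1 : sub s (meet a b) := sub_meet hsa hsb
  have h2 := T' h1 (meet_sub_left : sub (meet a b) a)
  -- h2 : sub (a⁻¹ * meet a b) (a⁻¹ * s)
  have h3 : sub (a⁻¹ * s) (meet a⁻¹ (a⁻¹ * b)) := sub_meet (S_fwd hsa) hm
  have h4 : meet a⁻¹ (a⁻¹ * b) = a⁻¹ * meet a b := by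
    rw [star a b, inv_mul_cancel_left]
  rw [h4] at h3
  have := sub_antisymm h3 h2
  exact mul_left_cancel this

/-- Uniqueness of the median point (general basepoint). -/
theorem eq_medY_of {s a b c : G} (h1 : sub (c⁻¹ * s) (c⁻¹ * a))
    (h2 : sub (c⁻¹ * s) (c⁻¹ * b)) (h3 : sub (a⁻¹ * s) (a⁻¹ * b)) :
    s = c * meet (c⁻¹ * a) (c⁻¹ * b) := by
  have h3' : sub ((c⁻¹ * a)⁻¹ * (c⁻¹ * s)) ((c⁻¹ * a)⁻¹ * (c⁻¹ * b)) := by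
    rw [mul_inv_rev, inv_inv, mul_assoc, mul_inv_cancel_left,
      mul_assoc, mul_inv_cancel_left]
    exact h3
  have := eq_meet_of h1 h2 h3'
  rw [← this, mul_inv_cancel_left]

end Basic

section Joins

variable {G : Type*} [MedianGroup G]

/-- (D): division by the bottom of a chain. -/
theorem D' {m c a : G} (h1 : sub m c) (h2 : sub c a) : sub (m⁻¹ * c) (m⁻¹ * a) := by
  apply S_bwd
  have e1 : (m⁻¹ * a)⁻¹ = a⁻¹ * m := by rw [mul_inv_rev, inv_inv]
  rw [e1, mul_assoc, mul_inv_cancel_left]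
  -- goal : sub (a⁻¹ * c) (a⁻¹ * m)
  exact T' h1 h2

/-- (Dinv). -/
theorem Dinv' {m c a : G} (h1 : sub m a) (h2 : sub c (m⁻¹ * a)) : sub (m * c) a := by
  apply S_bwd
  have h3 := S_fwd h2
  -- h3 : sub ((m⁻¹*a)⁻¹ * c) (m⁻¹*a)⁻¹
  rw [mul_inv_rev, inv_inv] at h3
  -- h3 : sub (a⁻¹ * m * c) (a⁻¹ * m)
  rw [mul_assoc] at h3
  exact sub_trans h3 (S_fwd h1)

/-- Meets translate along common lower bounds. -/
theorem meet_translate {m a b : G} (ha : sub m a) (hb : sub m b) :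
    meet (m⁻¹ * a) (m⁻¹ * b) = m⁻¹ * meet a b := by
  have hmab : sub m (meet a b) := sub_meet ha hb
  have h1 : sub (m⁻¹ * meet a b) (m⁻¹ * a) := D' hmab meet_sub_left
  have h2 : sub (m⁻¹ * meet a b) (m⁻¹ * b) := D' hmab meet_sub_right
  have h3 : sub ((m⁻¹ * a)⁻¹ * (m⁻¹ * meet a b)) ((m⁻¹ * a)⁻¹ * (m⁻¹ * b)) := by
    rw [mul_inv_rev, inv_inv, mul_assoc, mul_inv_cancel_left, mul_assoc,
      mul_inv_cancel_left]
    exact meet_axiom a b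
  exact (eq_meet_of h1 h2 h3).symm

/-- The canonical join of a bounded pair. -/
theorem isJoin_Y {a b t : G} (ha : sub a t) (hb : sub b t) :
    isJoin a b (t * meet (t⁻¹ * a) (t⁻¹ * b)) := by
  set M := meet (t⁻¹ * a) (t⁻¹ * b) with hM
  have hMa : sub M (t⁻¹ * a) := meet_sub_left
  have hMb : sub M (t⁻¹ * b) := meet_sub_right
  have hat : sub (t⁻¹ * a) t⁻¹ := S_fwd ha
  have hbt : sub (t⁻¹ * b) t⁻¹ := S_fwd hb
  have h1 : sub a (t * M) := by
    have := T' hMa hat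
    rwa [inv_inv, mul_inv_cancel_left] at this
  have h2 : sub b (t * M) := by
    have := T' hMb hbt
    rwa [inv_inv, mul_inv_cancel_left] at this
  have h3 : sub (t * M) t := by
    apply S_bwd
    rw [inv_mul_cancel_left]
    exact sub_trans hMa hat
  refine ⟨h1, h2, ?_⟩
  intro c hac hbc
  have had : sub a (meet (t * M) c) := sub_meet h1 hac
  have hbd : sub b (meet (t * M) c) := sub_meet h2 hbc
  have hdt : sub (meet (t * M) c) t := sub_trans meet_sub_left h3
  have htd_a := T' had hdt
  have htd_b := T' hbd hdt
  have hdM : sub (t⁻¹ * meet (t * M) c) M := sub_meet htd_a htd_b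
  have hMt : sub M t⁻¹ := sub_trans hMa hat
  have := T' hdM hMt
  rw [inv_inv, mul_inv_cancel_left] at this
  -- this : sub (t * M) (meet (t*M) c)
  exact sub_trans this meet_sub_right

theorem hasJoin_of_bounded {a b t : G} (ha : sub a t) (hb : sub b t) :
    hasJoin a b :=
  ⟨_, isJoin_Y ha hb⟩

theorem isJoin_unique {a b j j' : G} (h : isJoin a b j) (h' : isJoin a b j') :
    j = j' :=
  sub_antisymm (h.2.2 j' h'.1 h'.2.1) (h'.2.2 j h.1 h.2.1)

/-- An upper bound lying in the interval `[e,f]` is the join. -/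
theorem isJoin_of_mem {e f j : G} (he : sub e j) (hf : sub f j)
    (hm : sub (e⁻¹ * j) (e⁻¹ * f)) : isJoin e f j := by
  have h1 : sub (j⁻¹ * j) (j⁻¹ * e) := by
    rw [inv_mul_cancel]; exact one_sub _
  have h2 : sub (j⁻¹ * j) (j⁻¹ * f) := by
    rw [inv_mul_cancel]; exact one_sub _
  have hYj := eq_medY_of h1 h2 hm
  rw [show j = j * meet (j⁻¹ * e) (j⁻¹ * f) from hYj]
  exact isJoin_Y he hf

end Joins

section CLemmas

variable {G : Type*} [MedianGroup G]

theorem eq_one_of_sub_sub (hC : ∀ g : G, meet g g⁻¹ = 1) {g c : G}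
    (h1 : sub g c) (h2 : sub g c⁻¹) : g = 1 := by
  have := sub_meet h1 h2
  rw [hC c] at this
  exact sub_one this

/-- Inversion is monotone (uses C). -/
theorem sub_inv (hC : ∀ g : G, meet g g⁻¹ = 1)
    (hcomm : ∀ x y : G, x * y = y * x) {a b : G} (h : sub a b) :
    sub a⁻¹ b⁻¹ := by
  rw [sub_iff_meet_eq_one, inv_inv]
  have h1 : sub (meet a (a * b⁻¹)) b := sub_trans meet_sub_left h
  have h2 : sub (meet a (a * b⁻¹)) b⁻¹ := by
    refine sub_trans (meet_sub_right) ?_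
    rw [hcomm a b⁻¹]
    exact S_fwd h
  exact eq_one_of_sub_sub hC h1 h2

theorem meet_inv_inv (hC : ∀ g : G, meet g g⁻¹ = 1)
    (hcomm : ∀ x y : G, x * y = y * x) (a b : G) :
    meet a⁻¹ b⁻¹ = (meet a b)⁻¹ := by
  have d1 : sub ((meet a b)⁻¹) (meet a⁻¹ b⁻¹) :=
    sub_meet (sub_inv hC hcomm meet_sub_left) (sub_inv hC hcomm meet_sub_right)
  have n1 : sub ((meet a⁻¹ b⁻¹)⁻¹) a := by
    have := sub_inv hC hcomm (meet_sub_left : sub (meet a⁻¹ b⁻¹) a⁻¹)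
    rwa [inv_inv] at this
  have n2 : sub ((meet a⁻¹ b⁻¹)⁻¹) b := by
    have := sub_inv hC hcomm (meet_sub_right : sub (meet a⁻¹ b⁻¹) b⁻¹)
    rwa [inv_inv] at this
  have d2 : sub (meet a⁻¹ b⁻¹) ((meet a b)⁻¹) := by
    have := sub_inv hC hcomm (sub_meet n1 n2)
    rwa [inv_inv] at this
  exact sub_antisymm d2 d1

/-- The ⊆-half of the square lemma. -/
theorem sub_prod_of_mem {e f : G} (hef : meet e f = 1)
    (he : sub e (e * f)) (hf : sub f (e * f)) {s : G}
    (hs : meet (s⁻¹ * e) (s⁻¹ * f) = 1) : sub s (e * f) := by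
  have e1 : s⁻¹ * meet s e = meet s⁻¹ (s⁻¹ * e) := by
    rw [star s e, inv_mul_cancel_left]
  have e2 : s⁻¹ * meet s f = meet s⁻¹ (s⁻¹ * f) := by
    rw [star s f, inv_mul_cancel_left]
  have h3 : meet (s⁻¹ * meet s e) (s⁻¹ * meet s f) = 1 := by
    rw [e1, e2]
    calc meet (meet s⁻¹ (s⁻¹ * e)) (meet s⁻¹ (s⁻¹ * f))
        = meet s⁻¹ (meet (s⁻¹ * e) (meet s⁻¹ (s⁻¹ * f))) := meet_assoc _ _ _
      _ = meet s⁻¹ (meet (meet s⁻¹ (s⁻¹ * f)) (s⁻¹ * e)) := by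
            rw [meet_comm (s⁻¹ * e)]
      _ = meet s⁻¹ (meet s⁻¹ (meet (s⁻¹ * f) (s⁻¹ * e))) := by rw [meet_assoc]
      _ = meet (meet s⁻¹ s⁻¹) (meet (s⁻¹ * f) (s⁻¹ * e)) := by rw [meet_assoc]
      _ = meet s⁻¹ (meet (s⁻¹ * e) (s⁻¹ * f)) := by
            rw [meet_idem, meet_comm (s⁻¹ * f)]
      _ = 1 := by rw [hs, meet_comm, one_meet]
  have h4 : sub ((meet s e)⁻¹ * s) ((meet s e)⁻¹ * (meet s f)) :=
    interval_sub_iff.mpr h3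
  have h5 : isJoin (meet s e) (meet s f) s :=
    isJoin_of_mem meet_sub_left meet_sub_left h4
  exact h5.2.2 (e * f) (sub_trans meet_sub_right he) (sub_trans meet_sub_right hf)

/-- The ⊇-half of the square lemma. -/
theorem mem_of_sub_prod (hcomm : ∀ x y : G, x * y = y * x) {e f : G}
    (h4' : meet e⁻¹ f = 1) (hef : meet e f = 1)
    (h6' : meet f⁻¹ e⁻¹ = 1) {s : G} (hs : sub s (e * f)) :
    sub (e⁻¹ * s) (e⁻¹ * f) := by
  have hA : sub e⁻¹ (e⁻¹ * f) := by
    rw [sub_mul_iff, inv_inv]; exact hef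
  have hB : sub f (e⁻¹ * f) := by
    rw [hcomm e⁻¹ f, sub_mul_iff]; exact h6'
  have hmem : meet ((e⁻¹ * s)⁻¹ * e⁻¹) ((e⁻¹ * s)⁻¹ * f) = 1 := by
    have e1 : (e⁻¹ * s)⁻¹ * e⁻¹ = s⁻¹ := by
      rw [mul_inv_rev, inv_inv, mul_assoc, mul_inv_cancel, mul_one]
    have e2 : (e⁻¹ * s)⁻¹ * f = s⁻¹ * (e * f) := by
      rw [mul_inv_rev, inv_inv, mul_assoc]
    rw [e1, e2]
    exact sub_iff_meet_eq_one.mp hs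
  exact sub_prod_of_mem h4' hA hB hmem

/-- The square-cancellation lemma (SC): uses local linearity. -/
theorem square_cancel (hC : ∀ g : G, meet g g⁻¹ = 1)
    (hcomm : ∀ x y : G, x * y = y * x) (hll : LocallyLinear G) {e f t : G}
    (hef : meet e f = 1) (he : sub e t) (hf : sub f t) : e = 1 ∨ f = 1 := by
  set j := t * meet (t⁻¹ * e) (t⁻¹ * f) with hj
  have hJ : isJoin e f j := isJoin_Y he hf
  have hje : sub e j := hJ.1
  have hjf : sub f j := hJ.2.1
  -- j lies in the interval [e, f]
  have hmem : sub (e⁻¹ * j) (e⁻¹ * f) := by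
    have := meet_axiom (t⁻¹ * e) (t⁻¹ * f)
    rw [mul_inv_rev, inv_inv] at this
    rw [mul_assoc e⁻¹ t, mul_assoc e⁻¹ t, mul_inv_cancel_left] at this
    rw [hj]
    exact this
  have hmm : meet (j⁻¹ * e) (j⁻¹ * f) = 1 := interval_sub_iff.mp hmem
  -- sign facts
  have hie : sub e⁻¹ j⁻¹ := sub_inv hC hcomm hje
  have hif : sub f⁻¹ j⁻¹ := sub_inv hC hcomm hjf
  have h4a : meet e⁻¹ f = 1 := by
    apply eq_one_of_sub_sub hC (c := j⁻¹) (sub_trans meet_sub_left hie)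
    rw [inv_inv]
    exact sub_trans meet_sub_right hjf
  have h4b : meet f⁻¹ e = 1 := by
    apply eq_one_of_sub_sub hC (c := j⁻¹) (sub_trans meet_sub_left hif)
    rw [inv_inv]
    exact sub_trans meet_sub_right hje
  have h6 : meet e⁻¹ f⁻¹ = 1 := by
    rw [meet_inv_inv hC hcomm, hef, inv_one]
  have h6' : meet f⁻¹ e⁻¹ = 1 := by rw [meet_comm]; exact h6
  have heef : sub e (e * f) := by rw [sub_mul_iff]; exact h4a
  have hfef : sub f (e * f) := by
    rw [hcomm e f, sub_mul_iff]; exact h4b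
  -- the interval identity
  have hset : interval 1 (e * f) = interval e f := by
    ext z
    show sub (1⁻¹ * z) (1⁻¹ * (e * f)) ↔ sub (e⁻¹ * z) (e⁻¹ * f)
    rw [inv_one, one_mul, one_mul]
    constructor
    · intro h
      exact mem_of_sub_prod hcomm h4a hef h6' h
    · intro h
      exact sub_prod_of_mem hef heef hfef (interval_sub_iff.mp h)
  have hEq := hll 1 (e * f) e f hset
  have hmemE : (e : G) ∈ ({1, e * f} : Set G) := by
    rw [← hEq]; exact Set.mem_insert e {f}
  rcases hmemE with h | h
  · exact Or.inl h
  · right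
    have : e = e * f := h
    exact (left_eq_mul.mp this)

end CLemmas

section AtoC

variable {G : Type*} [MedianGroup G]

/-- In an A-group, `x ∩ x⁻¹ = 1`. -/
theorem agroup_implies_C (hcomm : ∀ x y : G, x * y = y * x)
    (hA : AGroup G) : ∀ x : G, meet x x⁻¹ = 1 := by
  have hmc : ∀ a b c : G, a * (b * c) = b * (a * c) := fun a b c => by
    rw [← mul_assoc, hcomm a b, mul_assoc]
  obtain ⟨hPerp, hA1, hA2, hA4⟩ := hA
  intro x
  set m := meet x x⁻¹ with hm
  have hmx : sub m x := meet_sub_left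
  have hmxi : sub m x⁻¹ := meet_sub_right
  have hxm_x : sub (x * m) x := by
    have := S_fwd hmxi
    rwa [inv_inv] at this
  have hxim_xi : sub (x⁻¹ * m) x⁻¹ := S_fwd hmx
  set w := meet (x * m) (x⁻¹ * m) with hw
  have hw_xm : sub w (x * m) := meet_sub_left
  have hw_xim : sub w (x⁻¹ * m) := meet_sub_right
  have hw_x : sub w x := sub_trans hw_xm hxm_x
  have hw_xi : sub w x⁻¹ := sub_trans hw_xim hxim_xi
  have hw_m : sub w m := sub_meet hw_x hw_xi
  have h4 : sub m (x⁻¹ * w) := by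
    have := T' hw_xm hxm_x
    rwa [inv_mul_cancel_left] at this
  have h5 : sub m (x * w) := by
    have := T' hw_xim hxim_xi
    rwa [inv_inv, mul_inv_cancel_left] at this
  -- v := w⁻¹ m is below x and x⁻¹
  have h6 : sub (w⁻¹ * m) x := by
    have t1 := T' hw_m h5
    -- t1 : sub ((x*w)⁻¹ * m) ((x*w)⁻¹ * w)
    rw [show (x * w)⁻¹ * m = w⁻¹ * x⁻¹ * m by rw [mul_inv_rev],
      show (x * w)⁻¹ * w = x⁻¹ by
        rw [mul_inv_rev, mul_assoc, hcomm x⁻¹ w, inv_mul_cancel_left]] at t1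
    have t2 := S_fwd t1
    rw [inv_inv] at t2
    rwa [show x * (w⁻¹ * x⁻¹ * m) = w⁻¹ * m by
      rw [mul_assoc w⁻¹ x⁻¹ m, hmc x w⁻¹ (x⁻¹ * m), mul_inv_cancel_left]] at t2
  have h7 : sub (w⁻¹ * m) x⁻¹ := by
    have t1 := T' hw_m h4
    rw [show (x⁻¹ * w)⁻¹ * m = w⁻¹ * x * m by rw [mul_inv_rev, inv_inv],
      show (x⁻¹ * w)⁻¹ * w = x by
        rw [mul_inv_rev, inv_inv, mul_assoc, hcomm x w, inv_mul_cancel_left]] at t1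
    have t2 := S_fwd t1
    rwa [show x⁻¹ * (w⁻¹ * x * m) = w⁻¹ * m by
      rw [mul_assoc w⁻¹ x m, hmc x⁻¹ w⁻¹ (x * m), inv_mul_cancel_left]] at t2
  have hv_m : sub (w⁻¹ * m) m := by
    have := sub_meet h6 h7
    rwa [← hm] at this
  -- the A2 instance
  have hyp1 : meet (w⁻¹ * (x * m)) (w⁻¹ * (x⁻¹ * m)) = 1 := by
    rw [meet_translate hw_xm hw_xim, ← hw, inv_mul_cancel]
  have hyp2 : meet (w⁻¹ * (x * m))⁻¹ (m⁻¹ * w) = 1 := by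
    have e1 : (w⁻¹ * (x * m))⁻¹ = (m⁻¹ * w) * x⁻¹ := by
      rw [mul_inv_rev, mul_inv_rev, inv_inv, mul_assoc, hcomm x⁻¹ w,
        ← mul_assoc]
    rw [e1, meet_comm, meet_mul_eq_one_iff, mul_inv_rev, inv_inv]
    exact h7
  have hyp3 : meet (w⁻¹ * (x⁻¹ * m))⁻¹ (m⁻¹ * w) = 1 := by
    have e1 : (w⁻¹ * (x⁻¹ * m))⁻¹ = (m⁻¹ * w) * x := by
      rw [mul_inv_rev, mul_inv_rev, inv_inv, inv_inv, mul_assoc, hcomm x w,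
        ← mul_assoc]
    rw [e1, meet_comm, meet_mul_eq_one_iff, mul_inv_rev, inv_inv]
    exact h6
  have hconc := hA2 _ _ _ hyp1 hyp2 hyp3
  rw [show (w⁻¹ * (x * m)) * (m⁻¹ * w) = x by
      rw [mul_assoc w⁻¹ (x * m) (m⁻¹ * w), mul_assoc x m (m⁻¹ * w),
        mul_inv_cancel_left, hmc w⁻¹ x w, inv_mul_cancel, mul_one]] at hconc
  rw [show (w⁻¹ * (x⁻¹ * m)) * (m⁻¹ * w) = x⁻¹ by
      rw [mul_assoc w⁻¹ (x⁻¹ * m) (m⁻¹ * w), mul_assoc x⁻¹ m (m⁻¹ * w),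
        mul_inv_cancel_left, hmc w⁻¹ x⁻¹ w, inv_mul_cancel, mul_one]] at hconc
  -- hconc : sub (meet x x⁻¹) (m⁻¹ * w)  i.e. sub m (m⁻¹ * w)
  rw [← hm] at hconc
  -- derive v ⊑ m⁻¹
  have hvm_v : sub (w⁻¹ * m * m) (w⁻¹ * m) := by
    have := S_fwd hconc
    rw [show (m⁻¹ * w)⁻¹ * m = w⁻¹ * m * m by rw [mul_inv_rev, inv_inv],
      show (m⁻¹ * w)⁻¹ = w⁻¹ * m by rw [mul_inv_rev, inv_inv]] at this
    exact this
  have hvm_m : sub (w⁻¹ * m * m) m := sub_trans hvm_v hv_m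
  have hv_mi : sub (w⁻¹ * m) m⁻¹ := by
    have := S_fwd hvm_m
    rwa [show m⁻¹ * (w⁻¹ * m * m) = w⁻¹ * m by
      rw [mul_assoc w⁻¹ m m, hmc m⁻¹ w⁻¹ (m * m), inv_mul_cancel_left]] at this
  -- A1
  have hjoin : hasJoin (m⁻¹ * w) m :=
    hasJoin_of_bounded (sub_refl _) hconc
  have hA1c : sub (m⁻¹ * w) m := by
    apply hA1 _ _ hjoin
    rw [mul_inv_rev, inv_inv]
    exact hv_mi
  have heq : m⁻¹ * w = m := sub_antisymm hA1c hconc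
  have hweq : w = m * m := by
    have := congrArg (fun z => m * z) heq
    simpa [mul_inv_cancel_left] using this
  have hmm_m : sub (m * m) m := by rw [← hweq]; exact hw_m
  have hfinal : sub m m⁻¹ := by
    have := S_fwd hmm_m
    rwa [inv_mul_cancel_left] at this
  exact hA4 m (hasJoin_of_bounded hfinal (sub_refl _))

end AtoC

section Classes

variable {G : Type*} [MedianGroup G]

/-- N1: "having nontrivial meet" is transitive. -/
theorem meet_ne_trans (hC : ∀ g : G, meet g g⁻¹ = 1)
    (hcomm : ∀ x y : G, x * y = y * x) (hll : LocallyLinear G) {u v w : G} (h1 : meet u v ≠ 1) (h2 : meet v w ≠ 1) :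
    meet u w ≠ 1 := by
  intro h0
  have hd : meet (meet u v) (meet w v) = 1 := by
    apply sub_one
    rw [← h0]
    exact sub_meet (sub_trans meet_sub_left meet_sub_left)
      (sub_trans meet_sub_right meet_sub_left)
  rcases square_cancel hC hcomm hll hd
      (meet_sub_right : sub (meet u v) v) (meet_sub_right : sub (meet w v) v)
    with h | h
  · exact h1 h
  · exact h2 (by rw [meet_comm]; exact h)

/-- N2: if `a ∩ b = 1` with `a, b ≠ 1` then `a⁻¹ ∩ b ≠ 1`. -/
theorem opp_class (hC : ∀ g : G, meet g g⁻¹ = 1)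
    (hcomm : ∀ x y : G, x * y = y * x) (hll : LocallyLinear G) {a b : G} (ha : a ≠ 1) (hb : b ≠ 1) (hab : meet a b = 1) :
    meet a⁻¹ b ≠ 1 := by
  intro h2
  by_cases h3 : meet a b⁻¹ = 1
  · -- pair (a,b) is bounded by a*b
    have hA : sub a (a * b) := by rw [sub_mul_iff]; exact h2
    have hB : sub b (a * b) := by
      rw [hcomm a b, sub_mul_iff, meet_comm]; exact h3
    rcases square_cancel hC hcomm hll hab hA hB with h | h
    exacts [ha h, hb h]
  · by_cases h4 : meet a⁻¹ b⁻¹ = 1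
    · -- pair (a⁻¹, b) is bounded by a⁻¹*b
      have hA : sub a⁻¹ (a⁻¹ * b) := by rw [sub_mul_iff, inv_inv]; exact hab
      have hB : sub b (a⁻¹ * b) := by
        rw [hcomm a⁻¹ b, sub_mul_iff, meet_comm]; exact h4
      rcases square_cancel hC hcomm hll h2 hA hB with h | h
      · exact ha (inv_eq_one.mp h)
      · exact hb h
    · -- pair (a∩b⁻¹, a⁻¹∩b⁻¹) is bounded by b⁻¹
      have hmeet : meet (meet a b⁻¹) (meet a⁻¹ b⁻¹) = 1 := by
        apply sub_one
        rw [← hC a]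
        exact sub_meet (sub_trans meet_sub_left meet_sub_left)
          (sub_trans meet_sub_right meet_sub_left)
      rcases square_cancel hC hcomm hll hmeet
          (meet_sub_right : sub (meet a b⁻¹) b⁻¹)
          (meet_sub_right : sub (meet a⁻¹ b⁻¹) b⁻¹) with h | h
      exacts [h3 h, h4 h]

/-- N3: if `a ∩ b ≠ 1` then `a ∩ ab ≠ 1`. -/
theorem meet_mul_ne (hC : ∀ g : G, meet g g⁻¹ = 1)
    (hcomm : ∀ x y : G, x * y = y * x) (hll : LocallyLinear G) {a b : G} (ha : a ≠ 1) (hab : meet a b ≠ 1) :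
    meet a (a * b) ≠ 1 := by
  intro h0
  have hsub : sub a⁻¹ b := meet_mul_eq_one_iff.mp h0
  have hmeet : meet a⁻¹ (meet a b) = 1 := by
    apply sub_one
    rw [← hC a]
    exact sub_meet (sub_trans meet_sub_right meet_sub_left) meet_sub_left
  rcases square_cancel hC hcomm hll hmeet hsub
      (meet_sub_right : sub (meet a b) b) with h | h
  · exact ha (inv_eq_one.mp h)
  · exact hab h

end Classes

section OrderConstruction

variable {G : Type*} [MedianGroup G]

theorem order_of_C (hC : ∀ g : G, meet g g⁻¹ = 1)
    (hcomm : ∀ x y : G, x * y = y * x) (hll : LocallyLinear G) :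
    ∃ r : G → G → Prop, OrderCompat G r ∧ OrderCompat G (Function.swap r) ∧
      ∀ r' : G → G → Prop, OrderCompat G r' →
        r' = r ∨ r' = Function.swap r := by
  have hmc : ∀ a b c : G, a * (b * c) = b * (a * c) := fun a b c => by
    rw [← mul_assoc, hcomm a b, mul_assoc]
  by_cases htriv : ∀ a : G, a = 1
  · -- trivial group
    refine ⟨fun _ _ => True, ?_, ?_, ?_⟩
    · refine ⟨fun _ => trivial, fun _ _ _ _ _ => trivial,
        fun a b _ _ => (htriv a).trans (htriv b).symm,
        fun _ _ => Or.inl trivial, fun _ _ _ _ => trivial, ?_⟩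
      intro x y
      constructor
      · intro _; exact Or.inl ⟨trivial, trivial⟩
      · intro _
        rw [htriv x, htriv y]
        exact sub_refl 1
    · refine ⟨fun _ => trivial, fun _ _ _ _ _ => trivial,
        fun a b _ _ => (htriv a).trans (htriv b).symm,
        fun _ _ => Or.inl trivial, fun _ _ _ _ => trivial, ?_⟩
      intro x y
      constructor
      · intro _; exact Or.inl ⟨trivial, trivial⟩
      · intro _
        rw [htriv x, htriv y]
        exact sub_refl 1
    · intro r' hr'
      left
      funext a b
      apply propext
      constructor
      · intro _; trivial
      · intro _
        rw [htriv a, htriv b]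
        exact hr'.1 1
  · push_neg at htriv
    obtain ⟨g₀, hg₀⟩ := htriv
    set K : G → Prop := fun z => z ≠ 1 ∧ meet z g₀ ≠ 1 with hKdef
    have hKsame : ∀ {z w : G}, meet z w ≠ 1 → K z → w ≠ 1 → K w := by
      intro z w h hz hw
      exact ⟨hw, meet_ne_trans hC hcomm hll (by rw [meet_comm]; exact h) hz.2⟩
    have hnotboth : ∀ z : G, K z → K z⁻¹ → False := by
      intro z hz hzi
      exact meet_ne_trans hC hcomm hll hz.2
        (by rw [meet_comm]; exact hzi.2) (hC z)
    have hone : ∀ z : G, z ≠ 1 → K z ∨ K z⁻¹ := by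
      intro z hz
      by_cases h : meet z g₀ = 1
      · exact Or.inr ⟨inv_ne_one.mpr hz, opp_class hC hcomm hll hz hg₀ h⟩
      · exact Or.inl ⟨hz, h⟩
    have hKmul : ∀ z w : G, K z → K w → K (z * w) := by
      intro z w hz hw
      have hzw_ne : z * w ≠ 1 := by
        intro h
        have hz' : z = w⁻¹ := eq_inv_of_mul_eq_one_left h
        rw [hz'] at hz
        exact hnotboth w hw hz
      have hmzw : meet z w ≠ 1 :=
        meet_ne_trans hC hcomm hll hz.2 (by rw [meet_comm]; exact hw.2)
      have hm2 : meet z (z * w) ≠ 1 := meet_mul_ne hC hcomm hll hz.1 hmzw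
      exact hKsame hm2 hz hzw_ne
    set r : G → G → Prop := fun a b => a = b ∨ K (b * a⁻¹) with hrdef
    have hr_refl : ∀ a : G, r a a := fun a => Or.inl rfl
    have hr_trans : ∀ a b c : G, r a b → r b c → r a c := by
      rintro a b c (rfl | h1) h2
      · exact h2
      · rcases h2 with rfl | h2
        · exact Or.inr h1
        · right
          rw [show c * a⁻¹ = (c * b⁻¹) * (b * a⁻¹) by
            rw [mul_assoc, inv_mul_cancel_left]]
          exact hKmul _ _ h2 h1
    have hr_antisymm : ∀ a b : G, r a b → r b a → a = b := by
      rintro a b (rfl | h1) h2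
      · rfl
      · rcases h2 with rfl | h2
        · rfl
        · exfalso
          apply hnotboth _ h1
          rw [show (b * a⁻¹)⁻¹ = a * b⁻¹ by rw [mul_inv_rev, inv_inv]]
          exact h2
    have hr_total : ∀ a b : G, r a b ∨ r b a := by
      intro a b
      by_cases hab : a = b
      · exact Or.inl (Or.inl hab)
      · have hne : b * a⁻¹ ≠ 1 := by
          intro h
          exact hab (mul_inv_eq_one.mp h).symm
        rcases hone _ hne with h | h
        · exact Or.inl (Or.inr h)
        · right; right
          rw [show a * b⁻¹ = (b * a⁻¹)⁻¹ by rw [mul_inv_rev, inv_inv]]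
          exact h
    have hr_mul : ∀ a b c : G, r a b → r (c * a) (c * b) := by
      rintro a b c (rfl | h)
      · exact Or.inl rfl
      · right
        rw [show (c * b) * (c * a)⁻¹ = b * a⁻¹ by
          rw [mul_inv_rev, hcomm c b, mul_assoc b c (a⁻¹ * c⁻¹),
            hmc c a⁻¹ c⁻¹, mul_inv_cancel, mul_one]]
        exact h
    -- the characterisation of sub in terms of r
    have hchar : ∀ x y : G, sub x y ↔ ((r 1 x ∧ r x y) ∨ (r x 1 ∧ r y x)) := by
      have hKyx : ∀ x y : G, K (x⁻¹ * y) → K (y * x⁻¹) := by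
        intro x y h; rwa [hcomm x⁻¹ y] at h
      have hKyx' : ∀ x y : G, K (y * x⁻¹) → K (x⁻¹ * y) := by
        intro x y h; rwa [hcomm y x⁻¹] at h
      intro x y
      constructor
      · intro hsub
        by_cases hx1 : x = 1
        · subst hx1
          by_cases hy1 : y = 1
          · exact Or.inl ⟨hr_refl 1, Or.inl hy1.symm⟩
          · rcases hone y hy1 with h | h
            · refine Or.inl ⟨hr_refl 1, Or.inr ?_⟩
              rwa [inv_one, mul_one]
            · refine Or.inr ⟨hr_refl 1, Or.inr ?_⟩
              rwa [one_mul]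
        · by_cases hxy : x = y
          · subst hxy
            rcases hone x hx1 with h | h
            · exact Or.inl ⟨Or.inr (by rwa [inv_one, mul_one]), hr_refl x⟩
            · exact Or.inr ⟨Or.inr (by rwa [one_mul]), hr_refl x⟩
          · have hbm : meet x⁻¹ (x⁻¹ * y) = 1 := sub_iff_meet_eq_one.mp hsub
            have hxiy_ne : x⁻¹ * y ≠ 1 := by
              intro h
              exact hxy (inv_mul_eq_one.mp h)
            have hxine : x⁻¹ ≠ 1 := inv_ne_one.mpr hx1
            rcases hone x hx1 with hKx | hKxi
            · -- positive x ⇒ left disjunct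
              have hKxy : K (x⁻¹ * y) := by
                by_cases h : K (x⁻¹ * y)
                · exact h
                · exfalso
                  rcases hone _ hxiy_ne with h' | h'
                  · exact h h'
                  · -- K ((x⁻¹*y)⁻¹); contradiction with hbm via inversion
                    have hmm : meet x ((x⁻¹ * y)⁻¹) = 1 := by
                      have := meet_inv_inv hC hcomm x⁻¹ (x⁻¹ * y)
                      rw [inv_inv, hbm, inv_one] at this
                      exact this
                    exact meet_ne_trans hC hcomm hll hKx.2
                      (by rw [meet_comm]; exact h'.2) hmm
              exact Or.inl ⟨Or.inr (by rwa [inv_one, mul_one]),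
                Or.inr (hKyx x y hKxy)⟩
            · -- negative x ⇒ right disjunct
              have hKxy : K ((x⁻¹ * y)⁻¹) := by
                by_cases h : K ((x⁻¹ * y)⁻¹)
                · exact h
                · exfalso
                  rcases hone _ hxiy_ne with h' | h'
                  · exact meet_ne_trans hC hcomm hll hKxi.2
                      (by rw [meet_comm]; exact h'.2) hbm
                  · exact h h'
              refine Or.inr ⟨Or.inr (by rwa [one_mul]), Or.inr ?_⟩
              rwa [mul_inv_rev, inv_inv, hcomm y⁻¹ x] at hKxy
      · rintro (⟨h1, h2⟩ | ⟨h1, h2⟩)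
        · rcases h1 with h1 | h1
          · rw [← h1]
            exact one_sub y
          · rcases h2 with rfl | h2
            · exact sub_refl x
            · rw [sub_iff_meet_eq_one]
              by_contra hne
              rw [inv_one, mul_one] at h1
              have hKxiy : K (x⁻¹ * y) := hKyx' x y h2
              have hKxi : K x⁻¹ :=
                hKsame (by rw [meet_comm]; exact hne) hKxiy
                  (inv_ne_one.mpr h1.1)
              exact hnotboth x h1 hKxi
        · rcases h1 with h1 | h1
          · rw [h1]
            exact one_sub y
          · rcases h2 with rfl | h2
            · exact sub_refl _
            · rw [one_mul] at h1
              rw [sub_iff_meet_eq_one]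
              by_contra hne
              by_cases hxy : x⁻¹ * y = 1
              · rw [show y = x from (inv_mul_eq_one.mp hxy).symm,
                  mul_inv_cancel] at h2
                exact h2.1 rfl
              · have hKxiy : K (x⁻¹ * y) := hKsame hne h1 hxy
                apply hnotboth _ hKxiy
                rw [mul_inv_rev, inv_inv, hcomm y⁻¹ x]
                exact h2
    -- assemble the two orders
    have hOC : OrderCompat G r :=
      ⟨hr_refl, hr_trans, hr_antisymm, hr_total, hr_mul, hchar⟩
    have hOCswap : OrderCompat G (Function.swap r) := by
      refine ⟨fun a => hr_refl a, fun a b c h1 h2 => hr_trans c b a h2 h1,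
        fun a b h1 h2 => hr_antisymm a b h2 h1,
        fun a b => by show r b a ∨ r a b; exact hr_total b a, fun a b c h => hr_mul b a c h, ?_⟩
      intro x y
      exact (hchar x y).trans or_comm
    refine ⟨r, hOC, hOCswap, ?_⟩
    -- uniqueness
    intro r' hr'
    obtain ⟨h'refl, h'trans, h'anti, h'total, h'mul, h'char⟩ := hr'
    have hu1 : ∀ a b : G, r' a b ↔ (a = b ∨ r' 1 (b * a⁻¹)) := by
      intro a b
      constructor
      · intro h
        by_cases hab : a = b
        · exact Or.inl hab
        · right
          have := h'mul a b a⁻¹ h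
          rwa [inv_mul_cancel, hcomm a⁻¹ b] at this
      · rintro (rfl | h)
        · exact h'refl a
        · have := h'mul _ _ a h
          rwa [mul_one, hcomm a (b * a⁻¹), mul_assoc, inv_mul_cancel,
            mul_one] at this
    have hu3 : ∀ z w : G, meet z w ≠ 1 → r' 1 z → r' 1 w := by
      intro z w hzw h1z
      have hA := (h'char (meet z w) z).mp meet_sub_left
      have hB := (h'char (meet z w) w).mp meet_sub_right
      have h1d : r' 1 (meet z w) := by
        rcases hA with ⟨h1, _⟩ | ⟨_, h2⟩
        · exact h1
        · exact h'trans 1 z (meet z w) h1z h2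
      rcases hB with ⟨_, h2⟩ | ⟨h1, _⟩
      · exact h'trans _ _ _ h1d h2
      · exact absurd (h'anti _ _ h1 h1d) hzw
    by_cases hg : r' 1 g₀
    · left
      have hK' : ∀ z : G, z ≠ 1 → (r' 1 z ↔ K z) := by
        intro z hz
        constructor
        · intro h
          by_cases hKz : K z
          · exact hKz
          · exfalso
            rcases hone z hz with h1 | h1
            · exact hKz h1
            · have h2 : r' 1 z⁻¹ :=
                hu3 g₀ z⁻¹ (by rw [meet_comm]; exact h1.2) hg
              have h3 := h'mul _ _ z h2
              rw [mul_one, mul_inv_cancel] at h3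
              exact hz (h'anti z 1 h3 h)
        · intro hKz
          exact hu3 g₀ z (by rw [meet_comm]; exact hKz.2) hg
      funext a b
      apply propext
      constructor
      · intro h
        rcases (hu1 a b).mp h with rfl | h2
        · exact Or.inl rfl
        · by_cases hab : a = b
          · exact Or.inl hab
          · have hne : b * a⁻¹ ≠ 1 := by
              intro h0
              exact hab (mul_inv_eq_one.mp h0).symm
            exact Or.inr ((hK' _ hne).mp h2)
      · rintro (rfl | h2)
        · exact h'refl a
        · apply (hu1 a b).mpr
          exact Or.inr ((hK' _ h2.1).mpr h2)
    · right
      have hK' : ∀ z : G, z ≠ 1 → (r' 1 z ↔ K z⁻¹) := by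
        intro z hz
        constructor
        · intro h
          rcases hone z hz with h1 | h1
          · exact absurd (hu3 z g₀ h1.2 h) hg
          · exact h1
        · intro hKzi
          by_cases hrz : r' 1 z
          · exact hrz
          · exfalso
            have h2 : r' z 1 := (h'total 1 z).resolve_left hrz
            have h3 := h'mul _ _ z⁻¹ h2
            rw [inv_mul_cancel, mul_one] at h3
            exact hg (hu3 z⁻¹ g₀ hKzi.2 h3)
      funext a b
      apply propext
      show r' a b ↔ r b a
      constructor
      · intro h
        rcases (hu1 a b).mp h with rfl | h2
        · exact Or.inl rfl
        · by_cases hab : a = b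
          · exact Or.inl hab.symm
          · have hne : b * a⁻¹ ≠ 1 := by
              intro h0
              exact hab (mul_inv_eq_one.mp h0).symm
            right
            have := (hK' _ hne).mp h2
            rwa [mul_inv_rev, inv_inv] at this
      · rintro (hba | h2)
        · rw [hba]
          exact h'refl a
        · apply (hu1 a b).mpr
          right
          by_cases hab : a = b
          · subst hab
            rw [mul_inv_cancel] at h2
            exact absurd rfl h2.1
          · have hne : b * a⁻¹ ≠ 1 := by
              intro h0
              exact hab (mul_inv_eq_one.mp h0).symm
            apply (hK' _ hne).mpr
            rwa [mul_inv_rev, inv_inv]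

end OrderConstruction

section OrderToAGroup

variable {G : Type*} [MedianGroup G]

theorem agroup_of_order (hcomm : ∀ x y : G, x * y = y * x)
    {r : G → G → Prop} (hr : OrderCompat G r) : AGroup G := by
  obtain ⟨hrefl, htrans, hanti, htotal, hmul, hchar⟩ := hr
  have possub : ∀ {x y : G}, r 1 x → r x y → sub x y := by
    intro x y h1 h2
    exact (hchar x y).mpr (Or.inl ⟨h1, h2⟩)
  have negsub : ∀ {x y : G}, r x 1 → r y x → sub x y := by
    intro x y h1 h2
    exact (hchar x y).mpr (Or.inr ⟨h1, h2⟩)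
  have meet_pos : ∀ {x y : G}, r 1 x → r 1 y → meet x y = 1 →
      x = 1 ∨ y = 1 := by
    intro x y hx hy h
    rcases htotal x y with hxy | hyx
    · left
      have hs : meet x y = x := possub hx hxy
      rw [hs] at h
      exact h
    · right
      have hs : meet y x = y := possub hy hyx
      rw [meet_comm, hs] at h
      exact h
  have meet_neg : ∀ {x y : G}, r x 1 → r y 1 → meet x y = 1 →
      x = 1 ∨ y = 1 := by
    intro x y hx hy h
    rcases htotal x y with hxy | hyx
    · right
      have hs : meet y x = y := negsub hy hxy
      rw [meet_comm, hs] at h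
      exact h
    · left
      have hs : meet x y = x := negsub hx hyx
      rw [hs] at h
      exact h
  have pos_of_perp : ∀ {x z : G}, r 1 z → z ≠ 1 → meet x⁻¹ z = 1 → r 1 x := by
    intro x z hz hzne h
    rcases htotal 1 x with hx | hx
    · exact hx
    · -- r x 1 hence r 1 x⁻¹
      have h1 := hmul x 1 x⁻¹ hx
      rw [inv_mul_cancel, mul_one] at h1
      -- h1 : r 1 x⁻¹
      rcases meet_pos h1 hz h with h2 | h2
      · rw [inv_eq_one.mp h2]
        exact hrefl 1
      · exact absurd h2 hzne
  have neg_of_perp : ∀ {x z : G}, r z 1 → z ≠ 1 → meet x⁻¹ z = 1 → r x 1 := by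
    intro x z hz hzne h
    rcases htotal x 1 with hx | hx
    · exact hx
    · -- r 1 x hence r x⁻¹ 1
      have h1 := hmul 1 x x⁻¹ hx
      rw [inv_mul_cancel, mul_one] at h1
      -- h1 : r x⁻¹ 1
      rcases meet_neg h1 hz h with h2 | h2
      · rw [inv_eq_one.mp h2]
        exact hrefl 1
      · exact absurd h2 hzne
  refine ⟨?_, ?_, ?_, ?_⟩
  · -- PerpGroup
    rintro x y ⟨hmeet, hjoin⟩
    have honeof : x = 1 ∨ y = 1 := by
      rcases htotal 1 x with hx | hx <;> rcases htotal 1 y with hy | hy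
      · exact meet_pos hx hy hmeet
      · -- r 1 x, r y 1 : mixed; use the join
        obtain ⟨j, hxj, hyj, _⟩ := hjoin
        rcases (hchar x j).mp hxj with ⟨h1, h2⟩ | ⟨h1, _⟩
        · rcases (hchar y j).mp hyj with ⟨h3, _⟩ | ⟨_, h4⟩
          · exact Or.inr (hanti y 1 hy h3)
          · -- r x j, r j y  ⇒ r x y; with r y 1 and r 1 x ⇒ x = 1
            have h5 := htrans x j y h2 h4
            have h6 := htrans x y 1 h5 hy
            exact Or.inl (hanti x 1 h6 h1)
        · exact Or.inl (hanti x 1 h1 hx)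
      · -- r x 1, r 1 y : mixed
        obtain ⟨j, hxj, hyj, _⟩ := hjoin
        rcases (hchar y j).mp hyj with ⟨h1, h2⟩ | ⟨h1, _⟩
        · rcases (hchar x j).mp hxj with ⟨h3, _⟩ | ⟨_, h4⟩
          · exact Or.inl (hanti x 1 hx h3)
          · have h5 := htrans y j x h2 h4
            have h6 := htrans y x 1 h5 hx
            exact Or.inr (hanti y 1 h6 h1)
        · exact Or.inr (hanti y 1 h1 hy)
      · exact meet_neg hx hy hmeet
    rcases honeof with rfl | rfl
    · rw [one_mul]
      exact ⟨one_sub y, sub_refl y, fun c _ h => h⟩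
    · rw [mul_one]
      exact ⟨sub_refl x, one_sub x, fun c h _ => h⟩
  · -- A1
    intro x y _ hsub
    rcases (hchar x⁻¹ y⁻¹).mp hsub with ⟨h1, h2⟩ | ⟨h1, h2⟩
    · -- r 1 x⁻¹ and r x⁻¹ y⁻¹
      have h3 := hmul 1 x⁻¹ x h1
      rw [mul_one, mul_inv_cancel] at h3
      -- h3 : r x 1
      have h4 := hmul x⁻¹ y⁻¹ (y * x) h2
      rw [show y * x * x⁻¹ = y by rw [mul_assoc, mul_inv_cancel, mul_one],
        show y * x * y⁻¹ = x by
          rw [hcomm y x, mul_assoc, mul_inv_cancel, mul_one]] at h4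
      -- h4 : r y x
      exact negsub h3 h4
    · -- r x⁻¹ 1 and r y⁻¹ x⁻¹
      have h3 := hmul x⁻¹ 1 x h1
      rw [mul_one, mul_inv_cancel] at h3
      -- h3 : r 1 x
      have h4 := hmul y⁻¹ x⁻¹ (x * y) h2
      rw [show x * y * y⁻¹ = x by rw [mul_assoc, mul_inv_cancel, mul_one],
        show x * y * x⁻¹ = y by
          rw [hcomm x y, mul_assoc, mul_inv_cancel, mul_one]] at h4
      -- h4 : r x y
      exact possub h3 h4
  · -- A2
    intro x y z h1 h2 h3
    rcases htotal 1 z with hz | hz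
    · by_cases hz1 : z = 1
      · subst hz1
        rw [mul_one, mul_one, h1]
        exact sub_refl 1
      · have hx : r 1 x := pos_of_perp hz hz1 h2
        have hy : r 1 y := pos_of_perp hz hz1 h3
        rcases meet_pos hx hy h1 with rfl | rfl
        · rw [one_mul]
          have hs : sub z (y * z) := by
            apply possub hz
            have := hmul 1 y z hy
            rwa [mul_one, hcomm z y] at this
          have hm : meet z (y * z) = z := hs
          rw [hm]
          exact sub_refl z
        · rw [one_mul]
          have hs : sub z (x * z) := by
            apply possub hz
            have := hmul 1 x z hx
            rwa [mul_one, hcomm z x] at this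
          have hm : meet (x * z) z = z := by rw [meet_comm]; exact hs
          rw [hm]
          exact sub_refl z
    · by_cases hz1 : z = 1
      · subst hz1
        rw [mul_one, mul_one, h1]
        exact sub_refl 1
      · have hx : r x 1 := neg_of_perp hz hz1 h2
        have hy : r y 1 := neg_of_perp hz hz1 h3
        rcases meet_neg hx hy h1 with rfl | rfl
        · rw [one_mul]
          have hs : sub z (y * z) := by
            apply negsub hz
            have := hmul y 1 z hy
            rwa [mul_one, hcomm z y] at this
          have hm : meet z (y * z) = z := hs
          rw [hm]
          exact sub_refl z
        · rw [one_mul]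
          have hs : sub z (x * z) := by
            apply negsub hz
            have := hmul x 1 z hx
            rwa [mul_one, hcomm z x] at this
          have hm : meet (x * z) z = z := by rw [meet_comm]; exact hs
          rw [hm]
          exact sub_refl z
  · -- A4
    rintro x ⟨j, hxj, hxij, _⟩
    rcases htotal 1 x with hx | hx
    · rcases (hchar x⁻¹ j).mp hxij with ⟨h1, _⟩ | ⟨h1, h2⟩
      · -- r 1 x⁻¹
        have h3 := hmul 1 x⁻¹ x h1
        rw [mul_one, mul_inv_cancel] at h3
        exact hanti x 1 h3 hx
      · -- r x⁻¹ 1 and r j x⁻¹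
        rcases (hchar x j).mp hxj with ⟨h3, h4⟩ | ⟨h3, _⟩
        · have h5 := htrans 1 x j h3 h4
          have h6 := htrans j x⁻¹ 1 h2 h1
          have h7 : j = 1 := hanti j 1 h6 h5
          rw [h7] at hxj
          exact sub_one hxj
        · exact hanti x 1 h3 hx
    · rcases (hchar x j).mp hxj with ⟨h1, _⟩ | ⟨h1, h2⟩
      · exact hanti x 1 hx h1
      · -- r x 1 and r j x
        rcases (hchar x⁻¹ j).mp hxij with ⟨h3, h4⟩ | ⟨h3, _⟩
        · have h5 := htrans 1 x⁻¹ j h3 h4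
          have h6 := htrans j x 1 h2 h1
          have h7 : j = 1 := hanti j 1 h6 h5
          rw [h7] at hxj
          exact sub_one hxj
        · -- r x⁻¹ 1 with r x 1 : then x⁻¹ and x both ≤ 1... gives r 1 x
          have h4 := hmul x⁻¹ 1 x h3
          rw [mul_one, mul_inv_cancel] at h4
          exact hanti x 1 hx h4
  
end OrderToAGroup

/-- Corollary 3.12: an Abelian locally linear median group `G`
is an A-group iff `x ∩ x⁻¹ = 1` for all `x`, iff there exist only two
(mutually opposite) total orders on `G` making `G` a totally ordered abelian
group whose associated median structure is the given one. -/
theorem abelian_locally_linear_agroup_iff {G : Type*} [MedianGroup G]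
    (hcomm : ∀ x y : G, x * y = y * x) (hll : LocallyLinear G) :
    (AGroup G ↔ ∀ x : G, meet x x⁻¹ = 1) ∧
    (AGroup G ↔ ∃ r : G → G → Prop, OrderCompat G r ∧
      OrderCompat G (Function.swap r) ∧
      ∀ r' : G → G → Prop, OrderCompat G r' →
        r' = r ∨ r' = Function.swap r) := by
  constructor
  · constructor
    · exact fun hA => agroup_implies_C hcomm hA
    · intro hC
      obtain ⟨r, hr, -, -⟩ := order_of_C hC hcomm hll
      exact agroup_of_order hcomm hr
  · constructor
    · intro hA
      exact order_of_C (agroup_implies_C hcomm hA) hcomm hll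
    · rintro ⟨r, hr, -, -⟩
      exact agroup_of_order hcomm hr

end MedianGroup
end ArtinMedian
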